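/- For every a ∈ ℂ with a² + a + 1 ≠ 0, let z_a = (−3(a² + 4a + 1)/(2(a² + a + 1)), −3(a² − 2a − 2)/(2(a² + a + 1))). Then: (i) g₁(z_a) = 0, so z_a lies on C₁; (ii) the conic C_{3,a} : (4a² + 8a)t² + (8a + 4)x² + (−12a² − 12a − 12)x − 27a² − 54a = 0 passes through z_a and through the points p₂ = (−(3/2)√3, 0) and p₃ = ((3/2)√3, 0) (which are intersection points of C₁ and C₂); (iii) the conic C′_{3,a} : (4a² − 4)t² + (−4a² − 16a − 4)tx + (−4a² + 4)x² + (−24a² − 24a − 24)x − 27a² + 27 = 0 also passes through z_a, p₂ and p₃. (These are the two families of weak contact conics of C₁ + C₂ passing through p₂, p₃ and tangent to C₁ at z_a.) -/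
import Mathlib


noncomputable section

/-- `g₁ = t² + x² + tx - 27/4`, the conic `C₁` in the affine plane `ℂ²`. -/
def g1 (t x : ℂ) : ℂ := t ^ 2 + x ^ 2 + t * x - 27 / 4

/-- The conic `C_{3,a}`. -/
def C3a (a t x : ℂ) : ℂ :=
  (4 * a ^ 2 + 8 * a) * t ^ 2 + (8 * a + 4) * x ^ 2 +
    (-12 * a ^ 2 - 12 * a - 12) * x - 27 * a ^ 2 - 54 * a

/-- The conic `C′_{3,a}`. -/
def C3'a (a t x : ℂ) : ℂ :=
  (4 * a ^ 2 - 4) * t ^ 2 + (-4 * a ^ 2 - 16 * a - 4) * t * x +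
    (-4 * a ^ 2 + 4) * x ^ 2 + (-24 * a ^ 2 - 24 * a - 24) * x - 27 * a ^ 2 + 27

/-- The `t`-coordinate of the point `z_a ∈ C₁`. -/
def zt (a : ℂ) : ℂ := -3 * (a ^ 2 + 4 * a + 1) / (2 * (a ^ 2 + a + 1))

/-- The `x`-coordinate of the point `z_a ∈ C₁`. -/
def zx (a : ℂ) : ℂ := -3 * (a ^ 2 - 2 * a - 2) / (2 * (a ^ 2 + a + 1))

/-- The points `p₂ = (-(3/2)√3, 0)` and `p₃ = ((3/2)√3, 0)` of `C₁ ∩ C₂`. -/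
def sqrt3 : ℂ := Real.sqrt 3

/-- For every `a ∈ ℂ` with `a² + a + 1 ≠ 0`: (i) the point `z_a` lies on `C₁`;
(ii) the conic `C_{3,a}` passes through `z_a`, `p₂ = (-(3/2)√3, 0)` and
`p₃ = ((3/2)√3, 0)`; (iii) the conic `C′_{3,a}` also passes through `z_a`, `p₂`, `p₃`.
These are the two families of weak contact conics of `C₁ + C₂` through `p₂, p₃`,
tangent to `C₁` at `z_a`. -/
theorem weak_contact_conic_families (a : ℂ) (ha : a ^ 2 + a + 1 ≠ 0) :
    g1 (zt a) (zx a) = 0 ∧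
    C3a a (zt a) (zx a) = 0 ∧
    C3a a (-(3 / 2) * sqrt3) 0 = 0 ∧
    C3a a ((3 / 2) * sqrt3) 0 = 0 ∧
    C3'a a (zt a) (zx a) = 0 ∧
    C3'a a (-(3 / 2) * sqrt3) 0 = 0 ∧
    C3'a a ((3 / 2) * sqrt3) 0 = 0 := by
  have hs : sqrt3 ^ 2 = 3 := by
    unfold sqrt3
    rw [← Complex.ofReal_pow, Real.sq_sqrt (by norm_num : (3:ℝ) ≥ 0)]
    norm_num
  have hu : (a ^ 2 + a + 1) * (a ^ 2 + a + 1)⁻¹ = 1 := mul_inv_cancel₀ ha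
  refine ⟨?_, ?_, ?_, ?_, ?_, ?_, ?_⟩
  · simp only [g1, zt, zx, div_eq_mul_inv, mul_inv]
    linear_combination ((27/4 * a^2 + 27/4 * a + 27/4) * (a ^ 2 + a + 1)⁻¹ + 27/4) * hu
  · simp only [C3a, zt, zx, div_eq_mul_inv, mul_inv]
    linear_combination ((9*a^4 + 99*a^3 + 135*a^2 + 126*a + 36) * (a ^ 2 + a + 1)⁻¹
      + 27*a^2 + 54*a) * hu
  · simp only [C3a]
    linear_combination (9 * a ^ 2 + 18 * a) * hs
  · simp only [C3a]
    linear_combination (9 * a ^ 2 + 18 * a) * hs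
  · simp only [C3'a, zt, zx, div_eq_mul_inv, mul_inv]
    linear_combination ((-9*a^4 + 63*a^3 + 108*a^2 + 117*a + 45) * (a ^ 2 + a + 1)⁻¹
      + 27*a^2 - 27) * hu
  · simp only [C3'a]
    linear_combination (9 * a ^ 2 - 9) * hs
  · simp only [C3'a]
    linear_combination (9 * a ^ 2 - 9) * hs

end
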